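/- Let K ⊂ ℝ³ be a non-degenerate 3-dimensional unbounded convex polyhedron such that the direction vectors of any two unbounded edges of K are linearly dependent (all unbounded edges are parallel). Then K can be placed in second trimming position with respect to any of its bounded facets. -/

import Mathlib

open Bornology Pointwise

/-- A convex polyhedron in `ℝ^n`: a finite intersection of closed half-spaces
`{x | ℓ x ≤ c}` with `ℓ` a nonzero linear functional (the empty intersection,
i.e. all of `ℝ^n`, is allowed). -/
def IsConvexPolyhedron (n : ℕ) (K : Set (Fin n → ℝ)) : Prop :=
  ∃ (m : ℕ) (L : Fin m → ((Fin n → ℝ) →ₗ[ℝ] ℝ)) (c : Fin m → ℝ),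
    (∀ i, L i ≠ 0) ∧ K = {x | ∀ i, L i x ≤ c i}

/-- The dimension of a subset of `ℝ^n`: the dimension of its affine span. -/
noncomputable def polyDim (n : ℕ) (K : Set (Fin n → ℝ)) : ℕ :=
  Module.finrank ℝ (affineSpan ℝ K).direction

/-- `F` is a face of `K`: the intersection of `K` with a supporting hyperplane,
i.e. an affine hyperplane meeting `K` such that `K` lies in one of the two
closed half-spaces it bounds. -/
def IsFaceOf (n : ℕ) (K F : Set (Fin n → ℝ)) : Prop :=
  ∃ (L : (Fin n → ℝ) →ₗ[ℝ] ℝ) (c : ℝ), L ≠ 0 ∧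
    (K ∩ {x | L x = c}).Nonempty ∧ (∀ x ∈ K, L x ≤ c) ∧ F = K ∩ {x | L x = c}

/-- `p` is a vertex of `K`: the singleton `{p}` is a face of `K`. -/
def IsVertexOf (n : ℕ) (K : Set (Fin n → ℝ)) (p : Fin n → ℝ) : Prop :=
  IsFaceOf n K {p}

/-- An edge of `K` is a face of dimension `1`. -/
def IsEdgeOf (n : ℕ) (K A : Set (Fin n → ℝ)) : Prop :=
  IsFaceOf n K A ∧ polyDim n A = 1

/-- A facet of `K` is a face of dimension `dim K - 1`. -/
def IsFacetOf (n : ℕ) (K F : Set (Fin n → ℝ)) : Prop :=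
  IsFaceOf n K F ∧ polyDim n F + 1 = polyDim n K

/-- `A` is an unbounded edge of `K` with direction vector `v`,
i.e. `A = q + ℝ≥0·v` for some vertex `q` of `K` and `v ≠ 0`. -/
def IsUnboundedEdgeWithDir (n : ℕ) (K A : Set (Fin n → ℝ)) (v : Fin n → ℝ) : Prop :=
  IsEdgeOf n K A ∧ ¬ IsBounded A ∧ v ≠ 0 ∧
    ∃ q, IsVertexOf n K q ∧ A = {x | ∃ t : ℝ, 0 ≤ t ∧ x = q + t • v}

/-- The recession cone of `K`. -/
def recCone (n : ℕ) (K : Set (Fin n → ℝ)) : Set (Fin n → ℝ) :=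
  {v | ∀ x ∈ K, ∀ t : ℝ, 0 ≤ t → x + t • v ∈ K}

/-- The projection `π_n : ℝ^n → ℝ^n`, `(x₁,…,x_n) ↦ (x₁,…,x_{n-1},0)`. -/
def projLast (n : ℕ) (x : Fin n → ℝ) : Fin n → ℝ :=
  fun i => if (i : ℕ) = n - 1 then 0 else x i

/-- The set `A_K`, realized inside the hyperplane `{x_n = 0}` of `ℝ^n`:
points `y = (a,0)` such that the fiber `I_a = π_n⁻¹(a,0) ∩ K` is nonempty
but does not contain `(a,0)`. -/
def AKset (n : ℕ) (K : Set (Fin n → ℝ)) : Set (Fin n → ℝ) :=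
  {y | (∀ i : Fin n, (i : ℕ) = n - 1 → y i = 0) ∧
    ({x | projLast n x = y} ∩ K).Nonempty ∧ y ∉ K}

/-- `K` is in first trimming position with respect to its facet `F`. -/
def FirstTrimmingPosition (n : ℕ) (K F : Set (Fin n → ℝ)) : Prop :=
  IsFacetOf n K F ∧
  (∀ x ∈ F, ∀ i : Fin n, (i : ℕ) = n - 2 → x i = 0) ∧
  (∀ x ∈ K, ∀ i : Fin n, (i : ℕ) = n - 2 → x i ≤ 0) ∧
  (∀ y : Fin n → ℝ, IsBounded ({x | projLast n x = y} ∩ K)) ∧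
  IsBounded (AKset n K)

/-- `K` is in second trimming position with respect to its facet `F`. -/
def SecondTrimmingPosition (n : ℕ) (K F : Set (Fin n → ℝ)) : Prop :=
  IsFacetOf n K F ∧
  (∀ x ∈ F, ∀ i : Fin n, (i : ℕ) = n - 1 → x i = 0) ∧
  (∀ x ∈ K, ∀ i : Fin n, (i : ℕ) = n - 1 → x i ≤ 0) ∧
  IsBounded (AKset n K)

/-- A polynomial map `ℝ^n → ℝ^m`: each component is given by a polynomial. -/
def IsPolynomialMap (n m : ℕ) (f : (Fin n → ℝ) → (Fin m → ℝ)) : Prop :=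
  ∃ p : Fin m → MvPolynomial (Fin n) ℝ, ∀ x i, f x i = MvPolynomial.eval x (p i)

/-!
Write `K = {x | ∀ i, L i x ≤ c i}` and `C = {v | ∀ i, L i v ≤ 0}` for its recession cone. A
vertex of `K` makes `C` salient, and unboundedness of `K` gives some `u ≠ 0` in `C`. If `C`
contained two independent vectors, a compact base of `C` would have two extreme points
(Krein–Milman); each spans an extreme ray of `C`, and every extreme ray of `C` is the direction
of an unbounded edge of `K`. So parallel unbounded edges force `C = ℝ≥0 u`.

A bounded facet `F = K ∩ {ℓ = c₀}` contains no half-line, so `ℓ u ≠ 0`, and there are affine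
coordinates whose last one is `ℓ - c₀` and in which `u` is vertical. Then `A_K` lies in the
projection of `K` along `u`, which is bounded: sliding a point of `K` back along `u` until a
constraint with `L i u < 0` becomes tight lands on one of finitely many faces, each bounded since
its recession cone is `C ∩ ker (L i) = 0`.
-/

open Filter Topology

/-- A limit of `x / ‖x‖` along points `x ∈ S` escaping to infinity. -/
theorem exists_norm_eq_one_map_nonpos_of_not_isBounded {E : Type*} [NormedAddCommGroup E]
    [NormedSpace ℝ E] [FiniteDimensional ℝ E] {S : Set E} (hS : ¬ IsBounded S) :
    ∃ w : E, ‖w‖ = 1 ∧ ∀ (g : E →ₗ[ℝ] ℝ) (d : ℝ), (∀ x ∈ S, g x ≤ d) → g w ≤ 0 := by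
  have hfar : ∀ k : ℕ, ∃ x ∈ S, (k : ℝ) < ‖x‖ := by
    by_contra! h
    obtain ⟨k, hk⟩ := h
    exact hS (isBounded_iff_forall_norm_le.2 ⟨k, hk⟩)
  choose x hxS hxk using hfar
  have hsphere : ∀ k, ‖x k‖⁻¹ • x k ∈ Metric.sphere (0 : E) 1 := fun k => by
    have : ‖x k‖ ≠ 0 := ((Nat.cast_nonneg k).trans_lt (hxk k)).ne'
    simp [norm_smul, this]
  obtain ⟨w, hw, φ, hφ, hlim⟩ := (isCompact_sphere (0 : E) 1).tendsto_subseq hsphere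
  have hnorm : Tendsto (fun k => ‖x (φ k)‖) atTop atTop :=
    tendsto_atTop_mono (fun k => (Nat.cast_le.2 hφ.le_apply).trans (hxk (φ k)).le)
      tendsto_natCast_atTop_atTop
  refine ⟨w, by simpa using hw, fun g d hg => ?_⟩
  have hg_lim : Tendsto (fun k => g (‖x (φ k)‖⁻¹ • x (φ k))) atTop (𝓝 (g w)) :=
    (g.continuous_of_finiteDimensional.tendsto w).comp hlim
  have hbound : Tendsto (fun k => ‖x (φ k)‖⁻¹ * d) atTop (𝓝 0) := by
    simpa using (tendsto_inv_atTop_zero.comp hnorm).mul_const d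
  refine le_of_tendsto_of_tendsto' hg_lim hbound fun k => ?_
  rw [map_smul, smul_eq_mul]
  exact mul_le_mul_of_nonneg_left (hg _ (hxS _)) (inv_nonneg.2 (norm_nonneg _))

theorem exists_ne_mem_extremePoints {E : Type*} [AddCommGroup E] [Module ℝ E]
    [TopologicalSpace E] [T2Space E] [IsTopologicalAddGroup E] [ContinuousSMul ℝ E]
    [LocallyConvexSpace ℝ E] {B : Set E} (hB : IsCompact B) (hBc : Convex ℝ B) {x y : E}
    (hx : x ∈ B) (hy : y ∈ B) (hxy : x ≠ y) :
    ∃ w₁ ∈ B.extremePoints ℝ, ∃ w₂ ∈ B.extremePoints ℝ, w₁ ≠ w₂ := by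
  by_contra! h
  have hsub : (B.extremePoints ℝ).Subsingleton := fun w₁ hw₁ w₂ hw₂ => h w₁ hw₁ w₂ hw₂
  rw [← closure_convexHull_extremePoints hB hBc, hsub.convex.convexHull_eq] at hx hy
  exact hxy (hsub.closure hx hy)

theorem exists_forall_add_mul_nonpos {ι : Type*} [Finite ι] (a g : ι → ℝ) :
    ∃ τ : ℝ, ∀ i, g i < 0 → a i + τ * g i ≤ 0 := by
  have : ∀ᶠ τ in atTop, ∀ i, g i < 0 → a i + τ * g i ≤ 0 := by
    refine eventually_all.2 fun i => ?_
    by_cases hi : g i < 0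
    · have : Tendsto (fun τ : ℝ => a i + τ * g i) atTop atBot :=
        tendsto_atBot_add_const_left _ _ (tendsto_id.atTop_mul_const_of_neg hi)
      exact (this.eventually (eventually_le_atBot 0)).mono fun _ h _ => h
    · exact Eventually.of_forall fun _ h => absurd h hi
  exact this.exists

section Geometry

variable {n : ℕ}

def halfLine (q v : Fin n → ℝ) : Set (Fin n → ℝ) :=
  {x | ∃ t : ℝ, 0 ≤ t ∧ x = q + t • v}

theorem not_isBounded_halfLine (q : Fin n → ℝ) {v : Fin n → ℝ} (hv : v ≠ 0) :
    ¬ IsBounded (halfLine q v) := by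
  intro hb
  obtain ⟨C, hC⟩ := isBounded_iff_forall_norm_le.1 hb
  have hv' : 0 < ‖v‖ := norm_pos_iff.2 hv
  set t := (C + ‖q‖ + 1) / ‖v‖
  have hC0 : 0 ≤ C := (norm_nonneg q).trans (hC q ⟨0, le_rfl, by simp⟩)
  have ht : t * ‖v‖ = C + ‖q‖ + 1 := div_mul_cancel₀ _ hv'.ne'
  have h1 := hC (q + t • v) ⟨t, by positivity, rfl⟩
  have h2 : ‖t • v‖ ≤ ‖q + t • v‖ + ‖q‖ := by
    simpa using norm_sub_le (q + t • v) q
  rw [norm_smul, Real.norm_of_nonneg (by positivity)] at h2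
  linarith

theorem polyDim_halfLine (q : Fin n → ℝ) {v : Fin n → ℝ} (hv : v ≠ 0) :
    polyDim n (halfLine q v) = 1 := by
  have hspan : affineSpan ℝ (halfLine q v) = line[ℝ, q, q + v] := by
    refine le_antisymm (affineSpan_le.2 ?_) (affineSpan_mono ℝ ?_)
    · rintro _ ⟨t, -, rfl⟩
      convert AffineMap.lineMap_mem_affineSpan_pair t q (q + v) using 1
      simp [AffineMap.lineMap_apply_module', add_comm]
    · rintro _ (rfl | rfl)
      exacts [⟨0, le_rfl, by simp⟩, ⟨1, zero_le_one, by simp⟩]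
  rw [polyDim, hspan, direction_affineSpan, vectorSpan_pair]
  exact finrank_span_singleton (by simpa using hv)

theorem polyDim_image_affineEquiv (T : (Fin n → ℝ) ≃ᵃ[ℝ] (Fin n → ℝ)) (S : Set (Fin n → ℝ)) :
    polyDim n (T '' S) = polyDim n S := by
  rw [polyDim, polyDim, ← AffineEquiv.coe_toAffineMap, ← AffineSubspace.map_span,
    AffineSubspace.map_direction]
  exact LinearEquiv.finrank_map_eq T.linear _

theorem IsVertexOf.mem {K : Set (Fin n → ℝ)} {p : Fin n → ℝ} (hp : IsVertexOf n K p) : p ∈ K := by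
  obtain ⟨L, c, -, -, -, hK⟩ := hp
  have : p ∈ K ∩ {x | L x = c} := hK ▸ Set.mem_singleton p
  exact this.1

theorem IsVertexOf.eq_zero_of_add_mem_of_sub_mem {K : Set (Fin n → ℝ)} {p x : Fin n → ℝ}
    (hp : IsVertexOf n K p) (h₁ : p + x ∈ K) (h₂ : p - x ∈ K) : x = 0 := by
  obtain ⟨L, c, -, -, hKc, hK⟩ := hp
  have hLp : L p = c := (hK ▸ Set.mem_singleton p : p ∈ K ∩ {x | L x = c}).2
  have h₁' := hKc _ h₁
  have h₂' := hKc _ h₂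
  rw [map_add] at h₁'
  rw [map_sub] at h₂'
  have hmem : p + x ∈ K ∩ {x | L x = c} := ⟨h₁, show L (p + x) = c by rw [map_add]; linarith⟩
  rw [← hK] at hmem
  simpa using hmem

theorem continuous_projLast : Continuous (projLast n) :=
  continuous_pi fun i => by
    by_cases hi : (i : ℕ) = n - 1
    · simpa [projLast, hi] using continuous_const
    · simpa [projLast, hi] using continuous_apply i

end Geometry

section Polyhedron

variable {ι : Type*} {n : ℕ}

def polyhedron (L : ι → (Fin n → ℝ) →ₗ[ℝ] ℝ) (c : ι → ℝ) : Set (Fin n → ℝ) :=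
  {x | ∀ i, L i x ≤ c i}

def tightSet (L : ι → (Fin n → ℝ) →ₗ[ℝ] ℝ) (c : ι → ℝ) (J : Finset ι) : Set (Fin n → ℝ) :=
  {x | x ∈ polyhedron L c ∧ ∀ i ∈ J, L i x = c i}

variable {L : ι → (Fin n → ℝ) →ₗ[ℝ] ℝ} {c : ι → ℝ}

theorem isClosed_polyhedron : IsClosed (polyhedron L c) := by
  simp only [polyhedron, Set.ofPred_forall]
  exact isClosed_iInter fun i => isClosed_le (L i).continuous_of_finiteDimensional continuous_const

theorem convex_polyhedron : Convex ℝ (polyhedron L c) := by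
  simp only [polyhedron, Set.ofPred_forall]
  exact convex_iInter fun i => convex_halfSpace_le (L i).isLinear (c i)

theorem add_smul_mem_polyhedron {x v : Fin n → ℝ} (hx : x ∈ polyhedron L c)
    (hv : v ∈ polyhedron L 0) {t : ℝ} (ht : 0 ≤ t) : x + t • v ∈ polyhedron L c := fun i => by
  have := mul_nonpos_of_nonneg_of_nonpos ht (hv i)
  simp only [map_add, map_smul, smul_eq_mul]
  linarith [hx i]

theorem IsVertexOf.eq_zero_of_mem_polyhedron_zero {p x : Fin n → ℝ}
    (hp : IsVertexOf n (polyhedron L c) p) (hx : x ∈ polyhedron L 0) (hnx : -x ∈ polyhedron L 0) :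
    x = 0 := by
  refine hp.eq_zero_of_add_mem_of_sub_mem ?_ ?_
  · simpa using add_smul_mem_polyhedron hp.mem hx zero_le_one
  · simpa [sub_eq_add_neg] using add_smul_mem_polyhedron hp.mem hnx zero_le_one

theorem exists_lt_zero_of_salient (hsal : ∀ x ∈ polyhedron L 0, -x ∈ polyhedron L 0 → x = 0)
    {v : Fin n → ℝ} (hv : v ∈ polyhedron L 0) (hv0 : v ≠ 0) : ∃ i, L i v < 0 := by
  by_contra! h
  exact hv0 (hsal v hv fun i => by simpa using h i)

theorem neg_sum_pos_of_salient [Fintype ι]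
    (hsal : ∀ x ∈ polyhedron L 0, -x ∈ polyhedron L 0 → x = 0) {x : Fin n → ℝ}
    (hx : x ∈ polyhedron L 0) (hx0 : x ≠ 0) : 0 < -∑ i, L i x := by
  obtain ⟨i, hi⟩ := exists_lt_zero_of_salient hsal hx hx0
  exact neg_pos.2 (Finset.sum_neg' (fun j _ => hx j) ⟨i, Finset.mem_univ i, hi⟩)

theorem exists_forall_add_smul_mem_iff [Fintype ι] {x v : Fin n → ℝ} (hx : x ∈ polyhedron L c)
    (hv : v ∈ polyhedron L 0) (hneg : ∃ i, L i v < 0) :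
    ∃ (a : ℝ) (i₀ : ι), L i₀ v < 0 ∧ L i₀ (x + a • v) = c i₀ ∧
      ∀ r : ℝ, x + r • v ∈ polyhedron L c ↔ a ≤ r := by
  obtain ⟨i₀, hi₀, hmax⟩ := Finset.exists_max_image (Finset.univ.filter fun i => L i v < 0)
    (fun i => (c i - L i x) / L i v) (by simpa [Finset.Nonempty] using hneg)
  simp only [Finset.mem_filter, Finset.mem_univ, true_and] at hi₀ hmax
  refine ⟨(c i₀ - L i₀ x) / L i₀ v, i₀, hi₀, ?_, fun r => ⟨fun h => ?_, fun h i => ?_⟩⟩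
  · simp only [map_add, map_smul, smul_eq_mul]
    rw [div_mul_cancel₀ _ hi₀.ne]
    ring
  · have := h i₀
    simp only [map_add, map_smul, smul_eq_mul] at this
    rw [div_le_iff_of_neg hi₀]
    linarith
  · simp only [map_add, map_smul, smul_eq_mul]
    rcases (hv i).lt_or_eq with hi | hi
    · have := (hmax i hi).trans h
      rw [div_le_iff_of_neg hi] at this
      linarith
    · simp only [Pi.zero_apply] at hi
      simpa [hi] using hx i

theorem tightSet_eq_inter_sum (J : Finset ι) :
    tightSet L c J = polyhedron L c ∩ {x | (∑ i ∈ J, L i) x = ∑ i ∈ J, c i} := by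
  ext x
  simp only [tightSet, Set.mem_inter_iff, Set.mem_ofPred_eq, LinearMap.sum_apply]
  refine and_congr_right fun hx => ?_
  rw [← sub_eq_zero, ← Finset.sum_sub_distrib,
    Finset.sum_eq_zero_iff_of_nonpos fun i _ => sub_nonpos.2 (hx i)]
  simp only [sub_eq_zero]

theorem isFaceOf_tightSet {J : Finset ι} (hne : (tightSet L c J).Nonempty)
    (hproper : tightSet L c J ≠ polyhedron L c) :
    IsFaceOf n (polyhedron L c) (tightSet L c J) := by
  rw [tightSet_eq_inter_sum] at hne hproper ⊢
  refine ⟨∑ i ∈ J, L i, ∑ i ∈ J, c i, fun h0 => hproper ?_, hne, fun x hx => ?_, rfl⟩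
  · obtain ⟨x₀, -, hx₀⟩ := hne
    have hc : ∑ i ∈ J, c i = 0 := by simpa [h0] using hx₀.symm
    ext x
    simp [h0, hc]
  · simpa using Finset.sum_le_sum fun i (_ : i ∈ J) => hx i

/-- Otherwise moving from `x₀` along `ζ`, corrected by a large multiple of `w`, would make some
constraint `i ∉ J` with `L i w = 0` tight as well. -/
theorem nonpos_of_forall_tightSet_insert_eq_empty [Fintype ι] [DecidableEq ι] {J : Finset ι}
    {x₀ w ζ : Fin n → ℝ} (hx₀ : x₀ ∈ tightSet L c J) (hw : w ∈ polyhedron L 0)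
    (hJw : ∀ i ∈ J, L i w = 0) (hJζ : ∀ i ∈ J, L i ζ = 0)
    (hmax : ∀ i ∉ J, L i w = 0 → tightSet L c (insert i J) = ∅) :
    ∀ i, L i w = 0 → L i ζ ≤ 0 := by
  by_contra! h
  obtain ⟨i₁, hi₁, hmin⟩ := Finset.exists_min_image
    (Finset.univ.filter fun i => L i w = 0 ∧ 0 < L i ζ) (fun i => (c i - L i x₀) / L i ζ)
    (by simpa [Finset.Nonempty] using h)
  simp only [Finset.mem_filter, Finset.mem_univ, true_and, and_imp] at hi₁ hmin
  set s := (c i₁ - L i₁ x₀) / L i₁ ζ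
  have hs : 0 ≤ s := div_nonneg (sub_nonneg.2 (hx₀.1 i₁)) hi₁.2.le
  obtain ⟨τ, hτ⟩ :=
    exists_forall_add_mul_nonpos (fun i => L i x₀ + s * L i ζ - c i) (fun i => L i w)
  have hval : ∀ i, L i (x₀ + s • ζ + τ • w) = L i x₀ + s * L i ζ + τ * L i w := fun i => by
    simp only [map_add, map_smul, smul_eq_mul]
  have hi₁J : i₁ ∉ J := fun hi => hi₁.2.ne' (hJζ i₁ hi)
  have hmem : x₀ + s • ζ + τ • w ∈ tightSet L c (insert i₁ J) := by
    refine ⟨fun i => ?_, fun i hi => ?_⟩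
    · rw [hval]
      rcases (hw i).lt_or_eq with hwi | hwi
      · linarith [hτ i hwi]
      · simp only [Pi.zero_apply] at hwi
        rw [hwi, mul_zero, add_zero]
        rcases le_or_gt (L i ζ) 0 with hζi | hζi
        · nlinarith [hx₀.1 i]
        · have := hmin i hwi hζi
          rw [le_div_iff₀ hζi] at this
          linarith
    · rw [hval]
      rcases Finset.mem_insert.1 hi with rfl | hi
      · rw [hi₁.1, div_mul_cancel₀ _ hi₁.2.ne']
        ring
      · rw [hJw i hi, hJζ i hi, hx₀.2 i hi]
        ring
  rw [hmax i₁ hi₁J hi₁.1] at hmem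
  exact hmem

theorem exists_eq_smul_of_forall_eq_zero [Finite ι] {w ζ : Fin n → ℝ}
    (hray : ∀ x ∈ polyhedron L 0, (∀ i, L i w = 0 → L i x = 0) → ∃ t : ℝ, 0 ≤ t ∧ x = t • w)
    (hw : w ∈ polyhedron L 0) (hζ : ∀ i, L i w = 0 → L i ζ = 0) : ∃ r : ℝ, ζ = r • w := by
  obtain ⟨τ, hτ⟩ := exists_forall_add_mul_nonpos (fun i => L i ζ) (fun i => L i w)
  have hval : ∀ i, L i (ζ + τ • w) = L i ζ + τ * L i w := fun i => by
    simp only [map_add, map_smul, smul_eq_mul]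
  have hmem : ζ + τ • w ∈ polyhedron L 0 := fun i => by
    rw [hval]
    rcases (hw i).lt_or_eq with hwi | hwi
    · exact hτ i hwi
    · simp only [Pi.zero_apply] at hwi ⊢
      simp [hwi, hζ i hwi]
  obtain ⟨t, -, ht⟩ := hray _ hmem fun i hi => by rw [hval, hi, hζ i hi]; ring
  exact ⟨t - τ, by rw [sub_smul, ← ht]; abel⟩

theorem exists_tightSet_eq_halfLine [Fintype ι] [DecidableEq ι] {J : Finset ι}
    {x₀ w : Fin n → ℝ} (hx₀ : x₀ ∈ tightSet L c J) (hw : w ∈ polyhedron L 0)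
    (hneg : ∃ i, L i w < 0) (hJw : ∀ i ∈ J, L i w = 0)
    (hline : ∀ v, (∀ i ∈ J, L i v = 0) → ∃ r : ℝ, v = r • w) :
    ∃ (q : Fin n → ℝ) (i₀ : ι), tightSet L c J = halfLine q w ∧
      tightSet L c (insert i₀ J) = {q} := by
  obtain ⟨a, i₀, hi₀, hq, hiff⟩ := exists_forall_add_smul_mem_iff hx₀.1 hw hneg
  have hJ : ∀ r : ℝ, ∀ i ∈ J, L i (x₀ + r • w) = c i := fun r i hi => by
    simp [hJw i hi, hx₀.2 i hi]
  have hE : tightSet L c J = halfLine (x₀ + a • w) w := by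
    ext x
    constructor
    · intro hx
      obtain ⟨r, hr⟩ := hline (x - x₀) fun i hi => by simp [hx.2 i hi, hx₀.2 i hi]
      have hx' : x = x₀ + r • w := by rw [← hr]; abel
      refine ⟨r - a, sub_nonneg.2 ((hiff r).1 (hx' ▸ hx.1)), ?_⟩
      rw [hx', sub_smul]
      abel
    · rintro ⟨t, ht, rfl⟩
      rw [add_assoc, ← add_smul]
      exact ⟨(hiff _).2 (by linarith), hJ _⟩
  refine ⟨x₀ + a • w, i₀, hE, Set.eq_singleton_iff_unique_mem.2 ⟨⟨(hiff a).2 le_rfl, ?_⟩, ?_⟩⟩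
  · intro i hi
    rcases Finset.mem_insert.1 hi with rfl | hi
    exacts [hq, hJ a i hi]
  · rintro x ⟨hxK, hxJ⟩
    have hx : x ∈ tightSet L c J := ⟨hxK, fun i hi => hxJ i (Finset.mem_insert_of_mem hi)⟩
    rw [hE] at hx
    obtain ⟨t, -, rfl⟩ := hx
    have h₀ := hxJ i₀ (Finset.mem_insert_self _ _)
    rw [map_add, hq, map_smul, smul_eq_mul, add_eq_left] at h₀
    simp [(mul_eq_zero.1 h₀).resolve_right hi₀.ne]

/-- Take a maximal set `J` of constraints with `L i w = 0` that can be made tight together; the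
face they cut out is a half-line parallel to `w`. -/
theorem exists_isUnboundedEdgeWithDir_of_ray [Fintype ι] {w : Fin n → ℝ}
    (hne : (polyhedron L c).Nonempty) (hdim : polyDim n (polyhedron L c) ≠ 1)
    (hsal : ∀ x ∈ polyhedron L 0, -x ∈ polyhedron L 0 → x = 0)
    (hw : w ∈ polyhedron L 0) (hw0 : w ≠ 0)
    (hray : ∀ x ∈ polyhedron L 0, (∀ i, L i w = 0 → L i x = 0) → ∃ t : ℝ, 0 ≤ t ∧ x = t • w) :
    ∃ A, IsUnboundedEdgeWithDir n (polyhedron L c) A w := by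
  classical
  obtain ⟨J, hJ, hJmax⟩ := Finset.exists_max_image
    (Finset.univ.filter fun J : Finset ι => (tightSet L c J).Nonempty ∧ ∀ i ∈ J, L i w = 0)
    Finset.card
    ⟨∅, Finset.mem_filter.2 ⟨Finset.mem_univ _, by simpa [tightSet] using hne, by simp⟩⟩
  simp only [Finset.mem_filter, Finset.mem_univ, true_and, and_imp] at hJ hJmax
  obtain ⟨⟨x₀, hx₀⟩, hJw⟩ := hJ
  have hmax : ∀ i ∉ J, L i w = 0 → tightSet L c (insert i J) = ∅ := fun i hi hiw => by
    by_contra h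
    have := hJmax _ (Set.nonempty_iff_ne_empty.2 h) fun j hj =>
      (Finset.mem_insert.1 hj).elim (· ▸ hiw) (hJw j)
    rw [Finset.card_insert_of_notMem hi] at this
    omega
  have hline : ∀ v, (∀ i ∈ J, L i v = 0) → ∃ r : ℝ, v = r • w := fun v hv => by
    have hnv : ∀ i ∈ J, L i (-v) = 0 := by simpa using hv
    have h₁ := nonpos_of_forall_tightSet_insert_eq_empty hx₀ hw hJw hv hmax
    have h₂ := nonpos_of_forall_tightSet_insert_eq_empty hx₀ hw hJw hnv hmax
    refine exists_eq_smul_of_forall_eq_zero hray hw fun i hi => le_antisymm (h₁ i hi) ?_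
    simpa using h₂ i hi
  obtain ⟨q, i₀, hE, hq⟩ :=
    exists_tightSet_eq_halfLine hx₀ hw (exists_lt_zero_of_salient hsal hw hw0) hJw hline
  refine ⟨tightSet L c J, ⟨⟨isFaceOf_tightSet ⟨x₀, hx₀⟩ fun h => hdim ?_, ?_⟩, ?_, hw0, q, ?_,
    hE⟩⟩
  · rw [← h, hE, polyDim_halfLine q hw0]
  · rw [hE, polyDim_halfLine q hw0]
  · rw [hE]
    exact not_isBounded_halfLine q hw0
  · have hqw : q + w ∈ tightSet L c J := hE ▸ ⟨1, zero_le_one, by rw [one_smul]⟩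
    have := isFaceOf_tightSet (J := insert i₀ J) (hq ▸ Set.singleton_nonempty q) fun h => by
      have : q + w ∈ ({q} : Set _) := hq ▸ h ▸ hqw.1
      exact hw0 (by simpa using this)
    rwa [hq] at this

/-- Otherwise `w` is the midpoint of `w ± ε • (b - w)`, which both lie in the set for small `ε`:
the constraints tight at `w` stay tight and the others stay strict. -/
theorem eq_of_mem_extremePoints_of_forall_eq [Finite ι] {φ : (Fin n → ℝ) →ₗ[ℝ] ℝ} {a : ℝ}
    {w b : Fin n → ℝ} (hw : w ∈ Set.extremePoints ℝ {x | x ∈ polyhedron L c ∧ φ x = a})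
    (hφb : φ b = a) (htight : ∀ i, L i w = c i → L i b = c i) : b = w := by
  obtain ⟨⟨hwK, hφw⟩, hext⟩ := mem_extremePoints.1 hw
  have hval : ∀ (g : (Fin n → ℝ) →ₗ[ℝ] ℝ) (s : ℝ), g (w + s • (b - w)) = g w + s * (g b - g w) :=
    fun g s => by simp only [map_add, map_smul, map_sub, smul_eq_mul]
  have hev : ∀ᶠ s in 𝓝 (0 : ℝ), ∀ i, L i (w + s • (b - w)) ≤ c i := by
    refine eventually_all.2 fun i => ?_
    simp only [hval]
    by_cases hi : L i w = c i
    · exact Eventually.of_forall fun s => by simp [htight i hi, hi]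
    · have hcont : ContinuousAt (fun s : ℝ => L i w + s * (L i b - L i w)) 0 := by fun_prop
      refine (hcont.eventually_lt continuousAt_const ?_).mono fun _ h => h.le
      simpa using lt_of_le_of_ne (hwK i) hi
  obtain ⟨ε, hε, hball⟩ := Metric.eventually_nhds_iff.1 hev
  have hmem : ∀ s, |s| < ε → w + s • (b - w) ∈ {x | x ∈ polyhedron L c ∧ φ x = a} :=
    fun s hs => ⟨hball (by simpa using hs), by rw [hval, hφb, hφw]; ring⟩
  have hseg : w ∈ openSegment ℝ (w + (ε / 2) • (b - w)) (w + (-(ε / 2)) • (b - w)) :=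
    ⟨1 / 2, 1 / 2, by norm_num, by norm_num, by norm_num, by module⟩
  have h := (hext _ (hmem _ (by rw [abs_of_pos (half_pos hε)]; linarith)) _
    (hmem _ (by rw [abs_neg, abs_of_pos (half_pos hε)]; linarith)) hseg).1
  rw [add_eq_left, smul_eq_zero, sub_eq_zero] at h
  exact h.resolve_left (half_pos hε).ne'

theorem exists_linearIndependent_unboundedEdges [Fintype ι] (hne : (polyhedron L c).Nonempty)
    (hdim : polyDim n (polyhedron L c) ≠ 1)
    (hsal : ∀ x ∈ polyhedron L 0, -x ∈ polyhedron L 0 → x = 0) {u₁ u₂ : Fin n → ℝ}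
    (hu₁ : u₁ ∈ polyhedron L 0) (hu₂ : u₂ ∈ polyhedron L 0)
    (hind : LinearIndependent ℝ ![u₁, u₂]) :
    ∃ A₁ A₂ w₁ w₂, IsUnboundedEdgeWithDir n (polyhedron L c) A₁ w₁ ∧
      IsUnboundedEdgeWithDir n (polyhedron L c) A₂ w₂ ∧ LinearIndependent ℝ ![w₁, w₂] := by
  set φ : (Fin n → ℝ) →ₗ[ℝ] ℝ := -∑ i, L i
  have hφ : ∀ x ∈ polyhedron L 0, x ≠ 0 → 0 < φ x := fun x hx hx0 => by
    simpa [φ, LinearMap.sum_apply] using neg_sum_pos_of_salient hsal hx hx0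
  set B := {x | x ∈ polyhedron L 0 ∧ φ x = 1}
  have hnorm : ∀ x ∈ polyhedron L 0, x ≠ 0 → (φ x)⁻¹ • x ∈ B := fun x hx hx0 =>
    ⟨fun i => by simpa only [map_smul, smul_eq_mul, Pi.zero_apply] using
      mul_nonpos_of_nonneg_of_nonpos (inv_nonneg.2 (hφ x hx hx0).le) (hx i),
      by rw [map_smul, smul_eq_mul, inv_mul_cancel₀ (hφ x hx hx0).ne']⟩
  have hBcpt : IsCompact B := by
    refine Metric.isCompact_of_isClosed_isBounded (isClosed_polyhedron.inter
      (isClosed_eq φ.continuous_of_finiteDimensional continuous_const)) ?_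
    by_contra hunb
    obtain ⟨w, hw1, hw⟩ := exists_norm_eq_one_map_nonpos_of_not_isBounded hunb
    have hwC : w ∈ polyhedron L 0 := fun i => hw (L i) 0 fun x hx => hx.1 i
    have hw0 : w ≠ 0 := by rintro rfl; simp at hw1
    linarith [hw φ 1 fun x hx => hx.2.le, hφ w hwC hw0]
  have hBconv : Convex ℝ B := convex_polyhedron.inter (convex_hyperplane φ.isLinear 1)
  obtain ⟨hu₂0, hu⟩ := linearIndependent_fin2.1 hind
  simp only [Matrix.cons_val_one, Matrix.cons_val_zero] at hu₂0 hu
  have hu₁0 : u₁ ≠ 0 := fun h => hu 0 (by simp [h])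
  obtain ⟨w₁, hw₁, w₂, hw₂, hw₁₂⟩ := exists_ne_mem_extremePoints hBcpt hBconv
    (hnorm u₁ hu₁ hu₁0) (hnorm u₂ hu₂ hu₂0) fun h => hu (φ u₁ * (φ u₂)⁻¹) (by
      rw [mul_smul, ← h, smul_inv_smul₀ (hφ u₁ hu₁ hu₁0).ne'])
  have hw0 : ∀ w ∈ B, w ≠ 0 := by rintro w ⟨-, hw⟩ rfl; simp at hw
  have hedge : ∀ w ∈ B.extremePoints ℝ, ∃ A, IsUnboundedEdgeWithDir n (polyhedron L c) A w := by
    intro w hw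
    refine exists_isUnboundedEdgeWithDir_of_ray hne hdim hsal hw.1.1 (hw0 w hw.1)
      fun x hx htight => ?_
    by_cases hx0 : x = 0
    · exact ⟨0, le_rfl, by simp [hx0]⟩
    have hxw := eq_of_mem_extremePoints_of_forall_eq hw (hnorm x hx hx0).2 fun i hi => by
      simp only [Pi.zero_apply, map_smul, smul_eq_mul] at hi ⊢
      rw [htight i hi, mul_zero]
    exact ⟨φ x, (hφ x hx hx0).le, by rw [← hxw, smul_inv_smul₀ (hφ x hx hx0).ne']⟩
  obtain ⟨A₁, hA₁⟩ := hedge w₁ hw₁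
  obtain ⟨A₂, hA₂⟩ := hedge w₂ hw₂
  refine ⟨A₁, A₂, w₁, w₂, hA₁, hA₂, linearIndependent_fin2.2 ⟨hw0 w₂ hw₂.1, fun a ha => hw₁₂ ?_⟩⟩
  simp only [Matrix.cons_val_one, Matrix.cons_val_zero] at ha
  have ha1 : a = 1 := by simpa [hw₁.1.2, hw₂.1.2] using congrArg φ ha
  rw [← ha, ha1, one_smul]

theorem exists_eq_smul_of_unboundedEdges_parallel [Fintype ι] (hne : (polyhedron L c).Nonempty)
    (hdim : polyDim n (polyhedron L c) ≠ 1)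
    (hsal : ∀ x ∈ polyhedron L 0, -x ∈ polyhedron L 0 → x = 0)
    (hpar : ∀ (A₁ A₂ : Set (Fin n → ℝ)) (v₁ v₂ : Fin n → ℝ),
      IsUnboundedEdgeWithDir n (polyhedron L c) A₁ v₁ →
      IsUnboundedEdgeWithDir n (polyhedron L c) A₂ v₂ → ¬ LinearIndependent ℝ ![v₁, v₂])
    {u v : Fin n → ℝ} (hu : u ∈ polyhedron L 0) (hu0 : u ≠ 0) (hv : v ∈ polyhedron L 0) :
    ∃ r : ℝ, v = r • u := by
  by_contra! h
  obtain ⟨A₁, A₂, w₁, w₂, h₁, h₂, hw⟩ := exists_linearIndependent_unboundedEdges hne hdim hsal hv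
    hu (linearIndependent_fin2.2 ⟨hu0, fun a ha => h a ha.symm⟩)
  exact hpar A₁ A₂ w₁ w₂ h₁ h₂ hw

theorem isBounded_tightSet_singleton {u : Fin n → ℝ}
    (hline : ∀ v ∈ polyhedron L 0, ∃ r : ℝ, v = r • u) {i : ι} (hi : L i u ≠ 0) :
    IsBounded (tightSet L c {i}) := by
  by_contra hunb
  obtain ⟨w, hw1, hw⟩ := exists_norm_eq_one_map_nonpos_of_not_isBounded hunb
  obtain ⟨r, rfl⟩ := hline w fun j => hw (L j) (c j) fun x hx => hx.1 j
  have h₁ := hw (L i) (c i) fun x hx => hx.1 i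
  have h₂ := hw (-L i) (-c i) fun x hx => by simp [hx.2 i (Finset.mem_singleton_self i)]
  have hr : r * L i u = 0 := by
    simp only [map_smul, smul_eq_mul, LinearMap.neg_apply] at h₁ h₂
    linarith
  simp [(mul_eq_zero.1 hr).resolve_right hi] at hw1

theorem ne_zero_of_isBounded_inter {ℓ : (Fin n → ℝ) →ₗ[ℝ] ℝ} {c₀ : ℝ} {x u : Fin n → ℝ}
    (hx : x ∈ polyhedron L c) (hxℓ : ℓ x = c₀) (hu : u ∈ polyhedron L 0) (hu0 : u ≠ 0)
    (hb : IsBounded (polyhedron L c ∩ {y | ℓ y = c₀})) : ℓ u ≠ 0 := by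
  intro h
  refine not_isBounded_halfLine x hu0 (hb.subset ?_)
  rintro _ ⟨t, ht, rfl⟩
  exact ⟨add_smul_mem_polyhedron hx hu ht, by simp [h, hxℓ]⟩

theorem exists_isBounded_forall_sub_smul_mem [Fintype ι]
    (hsal : ∀ x ∈ polyhedron L 0, -x ∈ polyhedron L 0 → x = 0) {u : Fin n → ℝ}
    (hu : u ∈ polyhedron L 0) (hu0 : u ≠ 0) (hline : ∀ v ∈ polyhedron L 0, ∃ r : ℝ, v = r • u) :
    ∃ B, IsBounded B ∧ ∀ x ∈ polyhedron L c, ∃ t : ℝ, x - t • u ∈ B := by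
  refine ⟨⋃ i ∈ {i | L i u < 0}, tightSet L c {i}, (isBounded_biUnion (Set.toFinite _)).2
    fun i hi => isBounded_tightSet_singleton hline (ne_of_lt hi), fun x hx => ?_⟩
  obtain ⟨a, i₀, hi₀, htight, hiff⟩ :=
    exists_forall_add_smul_mem_iff hx hu (exists_lt_zero_of_salient hsal hu hu0)
  refine ⟨-a, Set.mem_biUnion hi₀ ⟨?_, ?_⟩⟩
  · simpa [sub_eq_add_neg] using (hiff a).2 le_rfl
  · simpa [sub_eq_add_neg] using htight

end Polyhedron

section Coordinates

variable {n : ℕ}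

/-- First move `u` to the last basis vector `e`, then replace the last coordinate by `ℓ`; this is
invertible since `ℓ` does not vanish at the preimage of `e`. -/
theorem exists_linearEquiv_apply_last {ℓ : (Fin (n + 1) → ℝ) →ₗ[ℝ] ℝ} {u : Fin (n + 1) → ℝ}
    (hu : ℓ u ≠ 0) : ∃ P : (Fin (n + 1) → ℝ) ≃ₗ[ℝ] (Fin (n + 1) → ℝ),
      (∀ x, P x (Fin.last n) = ℓ x) ∧ ∀ i ≠ Fin.last n, P u i = 0 := by
  set e : Fin (n + 1) → ℝ := Pi.single (Fin.last n) 1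
  have hu0 : u ≠ 0 := by rintro rfl; simp at hu
  have he0 : e ≠ 0 := by simp [e]
  obtain ⟨g, hg⟩ := Submodule.exists_linearEquiv_restrict_eq
    ((LinearEquiv.coord ℝ _ u hu0).trans (LinearEquiv.toSpanNonzeroSingleton ℝ _ e he0))
  have hgu : g u = e := by
    simpa [LinearEquiv.coord_self] using (hg ⟨u, Submodule.mem_span_singleton_self u⟩).symm
  set Q : (Fin (n + 1) → ℝ) →ₗ[ℝ] (Fin (n + 1) → ℝ) :=
    LinearMap.pi fun i => if i = Fin.last n then ℓ ∘ₗ g.symm.toLinearMap else LinearMap.proj i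
  have hQ : ∀ x, Q x (Fin.last n) = ℓ (g.symm x) := fun x => by simp [Q]
  have hQ' : ∀ x, ∀ i ≠ Fin.last n, Q x i = x i := fun x i hi => by simp [Q, hi]
  have hinj : Function.Injective Q := by
    rw [← LinearMap.ker_eq_bot, LinearMap.ker_eq_bot']
    intro x hx
    have hxe : x = x (Fin.last n) • e := by
      funext i
      by_cases hi : i = Fin.last n
      · simp [e, hi]
      · simpa [e, hi] using (hQ' x i hi).symm.trans (congrFun hx i)
    have hlast : x (Fin.last n) * ℓ u = 0 := by
      have := (hQ x).symm.trans (congrFun hx (Fin.last n))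
      rwa [hxe, map_smul, ← hgu, LinearEquiv.symm_apply_apply, map_smul, smul_eq_mul] at this
    rw [hxe, (mul_eq_zero.1 hlast).resolve_right hu, zero_smul]
  refine ⟨g.trans (LinearEquiv.ofInjectiveEndo Q hinj), fun x => ?_, fun i hi => ?_⟩
  · simp [hQ]
  · simp [hgu, hQ' e i hi, e, hi]

theorem exists_secondTrimmingPosition {K F B : Set (Fin (n + 1) → ℝ)}
    {ℓ : (Fin (n + 1) → ℝ) →ₗ[ℝ] ℝ} {c₀ : ℝ} {u : Fin (n + 1) → ℝ}
    (hF : IsFacetOf (n + 1) K F) (hKℓ : ∀ x ∈ K, ℓ x ≤ c₀) (hFℓ : F = K ∩ {x | ℓ x = c₀})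
    (hu : ℓ u ≠ 0) (hB : IsBounded B) (hKB : ∀ x ∈ K, ∃ t : ℝ, x - t • u ∈ B) :
    ∃ T : (Fin (n + 1) → ℝ) ≃ᵃ[ℝ] (Fin (n + 1) → ℝ),
      SecondTrimmingPosition (n + 1) (T '' K) (T '' F) := by
  obtain ⟨P, hPℓ, hPu⟩ := exists_linearEquiv_apply_last hu
  set T := P.toAffineEquiv.trans
    (AffineEquiv.constVAdd ℝ (Fin (n + 1) → ℝ) (-(c₀ • Pi.single (Fin.last n) 1)))
  have hlast : ∀ i : Fin (n + 1), (i : ℕ) = n + 1 - 1 ↔ i = Fin.last n := fun i => by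
    simp [Fin.ext_iff]
  have hT : ∀ x, T x (Fin.last n) = ℓ x - c₀ := fun x => by
    simp [T, hPℓ, sub_eq_neg_add]
  have hTu : ∀ x (t : ℝ), projLast (n + 1) (T (x - t • u)) = projLast (n + 1) (T x) :=
    fun x t => funext fun i => by
      by_cases hi : i = Fin.last n
      · simp [projLast, (hlast i).2 hi]
      · simp [projLast, T, hPu i hi]
  have hFT : T '' F = T '' K ∩ {y | y (Fin.last n) = 0} := by
    ext y
    constructor
    · rintro ⟨x, hx, rfl⟩
      rw [hFℓ] at hx
      exact ⟨⟨x, hx.1, rfl⟩, by simp [hT, hx.2.out]⟩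
    · rintro ⟨⟨x, hx, rfl⟩, hy⟩
      refine ⟨x, hFℓ ▸ ⟨hx, ?_⟩, rfl⟩
      have := hT x
      simp only [Set.mem_ofPred_eq] at hy ⊢
      linarith
  have hKT : ∀ y ∈ T '' K, y (Fin.last n) ≤ 0 := by
    rintro _ ⟨x, hx, rfl⟩
    linarith [hT x, hKℓ x hx]
  have hFne : (T '' F).Nonempty := by
    obtain ⟨_, _, -, hne, -, hF'⟩ := hF.1
    rw [hF']
    exact hne.image T
  refine ⟨T, ⟨⟨LinearMap.proj (Fin.last n), 0, fun h => ?_, hFT ▸ hFne, hKT, hFT⟩, ?_⟩,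
    fun y hy i hi => ?_, fun y hy i hi => ?_, ?_⟩
  · simpa using congrFun (congrArg DFunLike.coe h) (Pi.single (Fin.last n) 1)
  · rw [polyDim_image_affineEquiv, polyDim_image_affineEquiv]
    exact hF.2
  · rw [hFT] at hy
    exact (hlast i).1 hi ▸ hy.2
  · exact (hlast i).1 hi ▸ hKT y hy
  · have hcont : Continuous fun x => projLast (n + 1) (T x) :=
      continuous_projLast.comp T.toAffineMap.continuous_of_finiteDimensional
    refine ((hB.isCompact_closure.image hcont).isBounded.subset ?_)
    rintro y ⟨-, ⟨z, hz, hzK⟩, -⟩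
    obtain ⟨x, hx, rfl⟩ := hzK
    obtain ⟨t, ht⟩ := hKB x hx
    exact ⟨x - t • u, subset_closure ht, (hTu x t).trans hz⟩

end Coordinates

/-- Proposition 2 (ii): if all unbounded edges of a non-degenerate 3-dimensional
unbounded convex polyhedron are parallel, then it can be placed in second trimming
position with respect to any of its bounded facets. -/
theorem placed_second_trimming_of_parallel_unbounded_edges
    (K : Set (Fin 3 → ℝ)) (hpoly : IsConvexPolyhedron 3 K)
    (hdim : polyDim 3 K = 3) (hunb : ¬ IsBounded K)
    (hnd : ∃ p, IsVertexOf 3 K p)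
    (hpar : ∀ (A₁ A₂ : Set (Fin 3 → ℝ)) (v₁ v₂ : Fin 3 → ℝ),
      IsUnboundedEdgeWithDir 3 K A₁ v₁ → IsUnboundedEdgeWithDir 3 K A₂ v₂ →
      ¬ LinearIndependent ℝ ![v₁, v₂]) :
    ∀ F, IsFacetOf 3 K F → IsBounded F →
      ∃ T : (Fin 3 → ℝ) ≃ᵃ[ℝ] (Fin 3 → ℝ),
        SecondTrimmingPosition 3 (T '' K) (T '' F) := by
  intro F hF hFb
  obtain ⟨m, L, c, -, rfl⟩ := hpoly
  obtain ⟨p, hp⟩ := hnd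
  have hsal : ∀ x ∈ polyhedron L 0, -x ∈ polyhedron L 0 → x = 0 := fun x hx hnx =>
    hp.eq_zero_of_mem_polyhedron_zero hx hnx
  obtain ⟨u, hu1, hu⟩ := exists_norm_eq_one_map_nonpos_of_not_isBounded hunb
  have huC : u ∈ polyhedron L 0 := fun i => hu (L i) (c i) fun x hx => hx i
  have hu0 : u ≠ 0 := by rintro rfl; simp at hu1
  have hline : ∀ v ∈ polyhedron L 0, ∃ r : ℝ, v = r • u := fun v hv =>
    exists_eq_smul_of_unboundedEdges_parallel ⟨p, hp.mem⟩ (ne_of_eq_of_ne hdim (by norm_num))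
      hsal hpar huC hu0 hv
  obtain ⟨B, hB, hKB⟩ := exists_isBounded_forall_sub_smul_mem (c := c) hsal huC hu0 hline
  obtain ⟨⟨ℓ, c₀, -, ⟨xb, hxb, hxbℓ⟩, hKℓ, hFℓ⟩, -⟩ := id hF
  have hℓu : ℓ u ≠ 0 := ne_zero_of_isBounded_inter hxb hxbℓ huC hu0 (hFℓ ▸ hFb)
  exact exists_secondTrimmingPosition hF hKℓ hFℓ hℓu hB hKB
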